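/- Let |q| < 1, |ρ| < 1, and let i, j, m ≥ 0 be integers. Then for all real x, y: Q_{i,j}(x,y|ρ q^m, q) · ∏_{r=0}^{m-1} ω(x√(1-q)/2, y√(1-q)/2 | ρ q^r) = (ρ²;q)_{2m} · Σ_{k=0}^{m} (-1)^k [m choose k]_q q^{k(k-1)/2} (1-q)^k ρ^k Q_{i+k,j+k}(x,y|ρ,q). -/

import Mathlib

open Finset MeasureTheory

noncomputable section

/-- [n]_q = 1 + q + ... + q^{n-1} -/
def qNat (q : ℝ) (n : ℕ) : ℝ := ∑ j ∈ Finset.range n, q ^ j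

/-- [n]_q! -/
def qFact (q : ℝ) : ℕ → ℝ
  | 0 => 1
  | n + 1 => qFact q n * qNat q (n + 1)

/-- q-binomial coefficient -/
def qBinom (q : ℝ) (n k : ℕ) : ℝ :=
  if k ≤ n then qFact q n / (qFact q (n - k) * qFact q k) else 0

/-- q-Pochhammer symbol (a;q)_n -/
def qPoch (a q : ℝ) (n : ℕ) : ℝ := ∏ j ∈ Finset.range n, (1 - a * q ^ j)

/-- q-Pochhammer symbol (a;q)_∞ -/
def qPochInf (a q : ℝ) : ℝ := ∏' j : ℕ, (1 - a * q ^ j)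

/-- continuous q-Hermite polynomials H_n(x|q) -/
def qHermite (q : ℝ) : ℕ → ℝ → ℝ
  | 0, _ => 1
  | 1, x => x
  | n + 2, x => x * qHermite q (n + 1) x - qNat q (n + 1) * qHermite q n x

/-- big q-Hermite polynomials H_n(x|a,q) -/
def bigqHermite (q a : ℝ) : ℕ → ℝ → ℝ
  | 0, _ => 1
  | 1, x => x - a
  | n + 2, x => (x - a * q ^ (n + 1)) * bigqHermite q a (n + 1) x -
      qNat q (n + 1) * bigqHermite q a n x

/-- rescaled Al-Salam--Chihara polynomials P_n(x|y,ρ,q) -/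
def ascP (q y ρ : ℝ) : ℕ → ℝ → ℝ
  | 0, _ => 1
  | 1, x => x - ρ * y
  | n + 2, x => (x - ρ * y * q ^ (n + 1)) * ascP q y ρ (n + 1) x -
      qNat q (n + 1) * (1 - ρ ^ 2 * q ^ n) * ascP q y ρ n x

/-- generating function φ_H(x|t,q) of the q-Hermite polynomials -/
def phiH (q t x : ℝ) : ℝ := ∑' n : ℕ, t ^ n / qFact q n * qHermite q n x

/-- γ_{i,j}(x,y|ρ,q) -/
def gammaPM (q ρ : ℝ) (i j : ℕ) (x y : ℝ) : ℝ :=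
  ∑' n : ℕ, ρ ^ n / qFact q n * qHermite q (n + i) x * qHermite q (n + j) y

/-- the polynomials Q_{i,j}(x,y|ρ,q) -/
def Qpoly (q ρ : ℝ) (i j : ℕ) (x y : ℝ) : ℝ :=
  ∑ s ∈ Finset.range (j + 1),
    (-1 : ℝ) ^ s * q ^ (s * (s - 1) / 2) * qBinom q j s * ρ ^ s * qHermite q (j - s) y *
      ascP q y ρ (i + s) x / qPoch (ρ ^ 2) q (i + s)

/-- the interval S(q) = [-2/√(1-q), 2/√(1-q)] -/
def Sq (q : ℝ) : Set ℝ := Set.Icc (-(2 / Real.sqrt (1 - q))) (2 / Real.sqrt (1 - q))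

/-- ω(x,y|ρ) -/
def omegaPM (x y ρ : ℝ) : ℝ :=
  (1 - ρ ^ 2) ^ 2 - 4 * ρ * (1 + ρ ^ 2) * x * y + 4 * ρ ^ 2 * (x ^ 2 + y ^ 2)

/-- l(x|a) -/
def lPM (x a : ℝ) : ℝ := (1 + a) ^ 2 - 4 * a * x ^ 2

/-- the q-Normal density f_N(x|q) -/
def fN (q x : ℝ) : ℝ :=
  Real.sqrt ((1 - q) * (4 - (1 - q) * x ^ 2)) * qPochInf q q / (2 * Real.pi) *
    ∏' j : ℕ, lPM (x * Real.sqrt (1 - q) / 2) (q ^ (j + 1))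

/-- the (q,ρ)-Conditional Normal density f_CN(x|y,ρ,q) -/
def fCN (q ρ x y : ℝ) : ℝ :=
  fN q x * qPochInf (ρ ^ 2) q /
    ∏' j : ℕ, omegaPM (x * Real.sqrt (1 - q) / 2) (y * Real.sqrt (1 - q) / 2) (ρ * q ^ j)

/-- the (ρ,q)-bivariate Normal density f_{2D}(x,y|ρ,q) -/
def f2D (q ρ x y : ℝ) : ℝ := fCN q ρ x y * fN q y

/-!
Induction on `m`. The case `m = 1` is the contiguous relation
`ω(ρ) Q_{i,j}(ρq) = (1-ρ²)(1-ρ²q) (Q_{i,j}(ρ) - (1-q)ρ Q_{i+1,j+1}(ρ))` (with `ω` rescaled by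
`√(1-q)/2`). It comes from the three-term relation
`ω(ρ) P_n(ρq) = (1-q)ρ² P_{n+2}(ρ) - (1-q)ρ(1-ρ²qⁿ⁺¹) y P_{n+1}(ρ) + (1-ρ²qⁿ)(1-ρ²qⁿ⁺¹) P_n(ρ)`
for the Al-Salam–Chihara polynomials: inserted into the sum defining `Q_{i,j}(ρq)`, the term with
`y` is split by the q-Hermite recurrence and the coefficients regroup by q-Pascal. For the inductive
step, apply the induction hypothesis at `ρq` and then the case `m = 1` to every summand; one more
use of q-Pascal turns the coefficients for `m` into those for `m + 1`.
-/

section QAnalogues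

variable {q : ℝ}

lemma qNat_succ (q : ℝ) (n : ℕ) : qNat q (n + 1) = qNat q n + q ^ n :=
  sum_range_succ _ n

lemma qNat_add (q : ℝ) (a b : ℕ) : qNat q (a + b) = qNat q a + q ^ a * qNat q b := by
  simp only [qNat, sum_range_add, mul_sum, pow_add]

lemma one_sub_mul_qNat (q : ℝ) (n : ℕ) : (1 - q) * qNat q n = 1 - q ^ n := by
  rw [qNat, mul_comm, geom_sum_mul_neg]

lemma qNat_succ_pos (hq : -1 < q) (n : ℕ) : 0 < qNat q (n + 1) := by
  rcases le_or_gt 0 q with hq0 | hq0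
  · rw [qNat, sum_range_succ']
    have : 0 ≤ ∑ k ∈ range n, q ^ (k + 1) := sum_nonneg fun k _ => pow_nonneg hq0 _
    simp only [pow_zero]
    linarith
  · have hpow : q ^ (n + 1) < 1 :=
      (le_abs_self _).trans_lt <| by
        rw [abs_pow]; exact pow_lt_one₀ (abs_nonneg q) (abs_lt.mpr ⟨hq, by linarith⟩) n.succ_ne_zero
    have := one_sub_mul_qNat q (n + 1)
    nlinarith

lemma qFact_pos (hq : -1 < q) (n : ℕ) : 0 < qFact q n := by
  induction n with
  | zero => exact one_pos
  | succ n ih => exact mul_pos ih (qNat_succ_pos hq n)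

lemma qBinom_of_lt (q : ℝ) {n k : ℕ} (h : n < k) : qBinom q n k = 0 := by
  simp [qBinom, Nat.not_le.mpr h]

lemma qBinom_add (q : ℝ) (a b : ℕ) :
    qBinom q (a + b) a = qFact q (a + b) / (qFact q b * qFact q a) := by
  simp [qBinom]

lemma qBinom_zero_right (hq : -1 < q) (n : ℕ) : qBinom q n 0 = 1 := by
  simp [qBinom, qFact, (qFact_pos hq n).ne']

lemma qBinom_self (hq : -1 < q) (n : ℕ) : qBinom q n n = 1 := by
  rw [qBinom, if_pos le_rfl, Nat.sub_self, qFact, one_mul, div_self (qFact_pos hq n).ne']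

lemma qBinom_succ_succ (hq : -1 < q) (j s : ℕ) :
    qBinom q (j + 1) (s + 1) = q ^ (s + 1) * qBinom q j (s + 1) + qBinom q j s := by
  rcases lt_or_ge j s with h | h
  · simp [qBinom_of_lt q h, qBinom_of_lt q (show j < s + 1 by omega),
      qBinom_of_lt q (show j + 1 < s + 1 by omega)]
  obtain ⟨t, rfl⟩ := Nat.exists_eq_add_of_le h
  cases t with
  | zero => simp [qBinom_self hq, qBinom_of_lt q (Nat.lt_succ_self s)]
  | succ t =>
    have e1 := qBinom_add q (s + 1) (t + 1)
    have e2 := qBinom_add q (s + 1) t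
    have e3 := qBinom_add q s (t + 1)
    rw [show s + 1 + (t + 1) = s + (t + 1) + 1 by ring] at e1
    rw [show s + 1 + t = s + (t + 1) by ring] at e2
    rw [e1, e2, e3]
    have hn : qNat q (s + (t + 1) + 1) = qNat q (s + 1) + q ^ (s + 1) * qNat q (t + 1) := by
      rw [← qNat_add]; congr 1; ring
    simp only [qFact, hn]
    have := (qFact_pos hq s).ne'
    have := (qFact_pos hq t).ne'
    have := (qFact_pos hq (s + (t + 1))).ne'
    have := (qNat_succ_pos hq s).ne'
    have := (qNat_succ_pos hq t).ne'
    field_simp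
    ring

lemma qBinom_succ_mul_qNat (hq : -1 < q) (j s : ℕ) :
    qBinom q j (s + 1) * qNat q (s + 1) = qBinom q j s * qNat q (j - s) := by
  rcases lt_or_ge j s with h | h
  · simp [qBinom_of_lt q h, qBinom_of_lt q (show j < s + 1 by omega)]
  obtain ⟨t, rfl⟩ := Nat.exists_eq_add_of_le h
  cases t with
  | zero => simp [qBinom_of_lt q (Nat.lt_succ_self s), qNat]
  | succ t =>
    have e1 := qBinom_add q (s + 1) t
    have e2 := qBinom_add q s (t + 1)
    rw [show s + 1 + t = s + (t + 1) by ring] at e1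
    rw [e1, e2, Nat.add_sub_cancel_left]
    simp only [qFact]
    have := (qFact_pos hq s).ne'
    have := (qFact_pos hq t).ne'
    have := (qNat_succ_pos hq s).ne'
    have := (qNat_succ_pos hq t).ne'
    field_simp

end QAnalogues

lemma qPoch_succ (a q : ℝ) (n : ℕ) : qPoch a q (n + 1) = qPoch a q n * (1 - a * q ^ n) :=
  prod_range_succ _ n

lemma qPoch_succ' (a q : ℝ) (n : ℕ) : qPoch a q (n + 1) = (1 - a) * qPoch (a * q) q n := by
  rw [qPoch, qPoch, prod_range_succ', pow_zero, mul_one, mul_comm]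
  exact congrArg _ (prod_congr rfl fun k _ => by ring)

lemma qPoch_sq_add_two (ρ q : ℝ) (n : ℕ) :
    qPoch (ρ ^ 2) q (n + 2) = (1 - ρ ^ 2) * (1 - ρ ^ 2 * q) * qPoch ((ρ * q) ^ 2) q n := by
  rw [qPoch_succ', qPoch_succ', mul_pow, mul_assoc (ρ ^ 2), ← sq, mul_assoc]

lemma qPoch_pos {a q : ℝ} (ha : |a| < 1) (hq : |q| ≤ 1) (n : ℕ) : 0 < qPoch a q n := by
  refine prod_pos fun k _ => sub_pos.mpr <| (le_abs_self _).trans_lt ?_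
  rw [abs_mul, abs_pow]
  exact mul_lt_one_of_nonneg_of_lt_one_left (abs_nonneg a) ha (pow_le_one₀ (abs_nonneg q) hq)

lemma mul_qHermite (q y : ℝ) (k : ℕ) :
    y * qHermite q k y = qHermite q (k + 1) y + qNat q k * qHermite q (k - 1) y := by
  rcases k with _ | k
  · simp [qHermite, qNat]
  · simp only [qHermite, Nat.add_sub_cancel]
    ring

def scaledOmega (q x y ρ : ℝ) : ℝ :=
  (1 - ρ ^ 2) ^ 2 - ρ * (1 + ρ ^ 2) * (1 - q) * x * y + ρ ^ 2 * (1 - q) * (x ^ 2 + y ^ 2)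

lemma omegaPM_mul_sqrt {q : ℝ} (hq : q ≤ 1) (x y ρ : ℝ) :
    omegaPM (x * Real.sqrt (1 - q) / 2) (y * Real.sqrt (1 - q) / 2) ρ = scaledOmega q x y ρ := by
  have h : Real.sqrt (1 - q) ^ 2 = 1 - q := Real.sq_sqrt (by linarith)
  simp only [omegaPM, scaledOmega]
  linear_combination (ρ ^ 2 * (x ^ 2 + y ^ 2) - ρ * (1 + ρ ^ 2) * x * y) * h

lemma scaledOmega_mul_ascP (q x y ρ : ℝ) (n : ℕ) :
    scaledOmega q x y ρ * ascP q y (ρ * q) n x =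
      (1 - q) * ρ ^ 2 * ascP q y ρ (n + 2) x
        - (1 - q) * ρ * (1 - ρ ^ 2 * q ^ (n + 1)) * y * ascP q y ρ (n + 1) x
        + (1 - ρ ^ 2 * q ^ n) * (1 - ρ ^ 2 * q ^ (n + 1)) * ascP q y ρ n x := by
  induction n using Nat.twoStepInduction with
  | zero =>
    simp only [scaledOmega, ascP, qNat, sum_range_one, pow_zero, zero_add, mul_one]
    ring
  | one =>
    simp only [scaledOmega, ascP, qNat, sum_range_succ, sum_range_zero, pow_zero, pow_one,
      zero_add, mul_one]
    ring
  | more n ih0 ih1 =>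
    simp only [ascP, qNat_succ] at ih0 ih1 ⊢
    linear_combination (x - ρ * y * q ^ (n + 2)) * ih1
      - (qNat q n + q ^ n) * (1 - ρ ^ 2 * q ^ (n + 2)) * ih0

lemma triangle_succ (s : ℕ) : (s + 1) * (s + 1 - 1) / 2 = s * (s - 1) / 2 + s := by
  simp only [← Nat.choose_two_right, Nat.choose_succ_succ, Nat.choose_one_right, add_comm]

/-- By the q-binomial theorem, `qBinomSum q t m g` is `∏_{r < m} (1 - t q^r E)` applied to `g`
and evaluated at `0`, where `E` is the shift `g ↦ g (· + 1)`. -/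
def qBinomSum (q t : ℝ) (m : ℕ) (g : ℕ → ℝ) : ℝ :=
  ∑ k ∈ range (m + 1), (-1) ^ k * q ^ (k * (k - 1) / 2) * qBinom q m k * t ^ k * g k

lemma qBinomSum_eq_sum_range_add_two (q t : ℝ) (m : ℕ) (g : ℕ → ℝ) :
    qBinomSum q t m g =
      ∑ k ∈ range (m + 2), (-1) ^ k * q ^ (k * (k - 1) / 2) * qBinom q m k * t ^ k * g k := by
  rw [qBinomSum, sum_range_succ _ (m + 1), qBinom_of_lt q (Nat.lt_succ_self m)]
  simp

lemma qBinomSum_const_mul (q t c : ℝ) (m : ℕ) (g : ℕ → ℝ) :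
    qBinomSum q t m (fun k => c * g k) = c * qBinomSum q t m g := by
  rw [qBinomSum, qBinomSum, mul_sum]
  exact sum_congr rfl fun k _ => by ring

lemma qBinomSum_succ {q : ℝ} (hq : -1 < q) (t : ℝ) (m : ℕ) (g : ℕ → ℝ) :
    qBinomSum q (t * q) m (fun k => g k - t * g (k + 1)) = qBinomSum q t (m + 1) g := by
  obtain ⟨B, hB⟩ : ∃ B : ℕ → ℝ, ∀ k, B k = (-1) ^ k * q ^ (k * (k - 1) / 2) * t ^ k *
      (q ^ k * qBinom q m k - qBinom q (m + 1) k) * g k := ⟨_, fun _ => rfl⟩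
  rw [qBinomSum_eq_sum_range_add_two, qBinomSum, ← sub_eq_zero, ← sum_sub_distrib]
  calc _ = ∑ k ∈ range (m + 2), (B k - B (k + 1)) := sum_congr rfl fun k _ => by
          rw [hB, hB, triangle_succ, pow_add, qBinom_succ_succ hq]
          ring
    _ = 0 := by
      rw [sum_range_sub', hB, hB, qBinom_zero_right hq, qBinom_zero_right hq,
        qBinom_of_lt q (show m < m + 2 by omega), qBinom_of_lt q (show m + 1 < m + 2 by omega)]
      ring

lemma qBinomSum_hermite_contiguous {q : ℝ} (hq : -1 < q) (ρ y : ℝ) (h p : ℕ → ℝ)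
    (hh : ∀ k, y * h k = h (k + 1) + qNat q k * h (k - 1)) (j : ℕ) :
    qBinomSum q (ρ * q) j
        (fun s => h (j - s) * ((1 - q) * ρ ^ 2 * p (s + 2) - (1 - q) * ρ * y * p (s + 1) + p s)) =
      qBinomSum q ρ j (fun s => h (j - s) * p s)
        - (1 - q) * ρ * qBinomSum q ρ (j + 1) (fun s => h (j + 1 - s) * p (s + 1)) := by
  -- `B s` collects the parts of the `s`-th summand that cancel against its neighbours.
  obtain ⟨B, hB⟩ : ∃ B : ℕ → ℝ, ∀ s, B s = (-1) ^ s * q ^ (s * (s - 1) / 2) * ρ ^ s *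
      ((1 - q) * ρ * (qBinom q (j + 1) s - q ^ s * qBinom q j s) * h (j + 1 - s) * p (s + 1)
        + (q ^ s - 1) * qBinom q j s * h (j - s) * p s) := ⟨_, fun _ => rfl⟩
  rw [qBinomSum_eq_sum_range_add_two, qBinomSum_eq_sum_range_add_two q ρ j, qBinomSum, mul_sum,
    ← sum_sub_distrib, ← sub_eq_zero, ← sum_sub_distrib]
  calc _ = ∑ s ∈ range (j + 2), (B s - B (s + 1)) := sum_congr rfl fun s hs => ?_
    _ = 0 := by
      rw [sum_range_sub', hB, hB, qBinom_zero_right hq, qBinom_zero_right hq,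
        qBinom_of_lt q (show j < j + 2 by omega), qBinom_of_lt q (show j + 1 < j + 2 by omega)]
      ring
  rw [hB, hB, triangle_succ, pow_add]
  rcases Nat.lt_succ_iff_lt_or_eq.mp (mem_range.mp hs) with hs | rfl
  · have hrec := hh (j - s)
    rw [show j - s + 1 = j + 1 - s by omega] at hrec
    rw [show j + 1 - (s + 1) = j - s by omega, show j - (s + 1) = j - s - 1 by omega,
      qBinom_succ_succ hq]
    linear_combination
      -((1 - q) * ρ * (-1) ^ s * q ^ (s * (s - 1) / 2) * ρ ^ s * q ^ s * qBinom q j s * p (s + 1))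
          * hrec
        + (1 - q) * ρ * (-1) ^ s * q ^ (s * (s - 1) / 2) * ρ ^ s * q ^ s * h (j - s - 1)
          * p (s + 1) * qBinom_succ_mul_qNat hq j s
        - ρ * (-1) ^ s * q ^ (s * (s - 1) / 2) * ρ ^ s * q ^ s * qBinom q j (s + 1)
          * h (j - s - 1) * p (s + 1) * one_sub_mul_qNat q (s + 1)
  · rw [qBinom_of_lt q (Nat.lt_succ_self j), qBinom_of_lt q (show j < j + 1 + 1 by omega),
      qBinom_of_lt q (show j + 1 < j + 1 + 1 by omega), qBinom_self hq]
    ring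

lemma scaledOmega_mul_ascP_div_qPoch {q ρ : ℝ} (x y : ℝ) {n : ℕ}
    (hρ : qPoch (ρ ^ 2) q (n + 2) ≠ 0) :
    scaledOmega q x y ρ * (ascP q y (ρ * q) n x / qPoch ((ρ * q) ^ 2) q n) =
      (1 - ρ ^ 2) * (1 - ρ ^ 2 * q) *
        ((1 - q) * ρ ^ 2 * (ascP q y ρ (n + 2) x / qPoch (ρ ^ 2) q (n + 2))
          - (1 - q) * ρ * y * (ascP q y ρ (n + 1) x / qPoch (ρ ^ 2) q (n + 1))
          + ascP q y ρ n x / qPoch (ρ ^ 2) q n) := by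
  have hshift := qPoch_sq_add_two ρ q n
  rw [qPoch_succ _ _ (n + 1), qPoch_succ] at hρ hshift ⊢
  have hE : qPoch ((ρ * q) ^ 2) q n ≠ 0 := right_ne_zero_of_mul (hshift ▸ hρ)
  rw [mul_div_assoc', div_eq_iff hE, mul_right_comm, ← hshift, scaledOmega_mul_ascP]
  simp only [mul_ne_zero_iff] at hρ
  obtain ⟨⟨hD, ha⟩, hb⟩ := hρ
  field_simp

lemma Qpoly_eq_qBinomSum (q ρ : ℝ) (i j : ℕ) (x y : ℝ) :
    Qpoly q ρ i j x y = qBinomSum q ρ j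
      (fun s => qHermite q (j - s) y * (ascP q y ρ (i + s) x / qPoch (ρ ^ 2) q (i + s))) :=
  sum_congr rfl fun s _ => by ring

lemma scaledOmega_mul_Qpoly {q ρ : ℝ} (hq : -1 < q) (hρ : ∀ n, qPoch (ρ ^ 2) q n ≠ 0)
    (i j : ℕ) (x y : ℝ) :
    scaledOmega q x y ρ * Qpoly q (ρ * q) i j x y =
      (1 - ρ ^ 2) * (1 - ρ ^ 2 * q) *
        (Qpoly q ρ i j x y - (1 - q) * ρ * Qpoly q ρ (i + 1) (j + 1) x y) := by
  have hcontig := qBinomSum_hermite_contiguous hq ρ y (fun k => qHermite q k y)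
    (fun s => ascP q y ρ (i + s) x / qPoch (ρ ^ 2) q (i + s)) (mul_qHermite q y) j
  simp only [← add_assoc] at hcontig
  simp only [Qpoly_eq_qBinomSum, add_right_comm i 1]
  rw [← hcontig, ← qBinomSum_const_mul, ← qBinomSum_const_mul]
  congr 1
  funext s
  rw [mul_left_comm, scaledOmega_mul_ascP_div_qPoch x y (hρ _)]
  ring

theorem Qpoly_mul_prod_scaledOmega {q ρ : ℝ} (hq : -1 < q) (hρ : ∀ n, qPoch (ρ ^ 2) q n ≠ 0)
    (i j m : ℕ) (x y : ℝ) :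
    Qpoly q (ρ * q ^ m) i j x y * ∏ r ∈ range m, scaledOmega q x y (ρ * q ^ r) =
      qPoch (ρ ^ 2) q (2 * m) *
        qBinomSum q ((1 - q) * ρ) m (fun k => Qpoly q ρ (i + k) (j + k) x y) := by
  induction m generalizing ρ with
  | zero => simp [qBinomSum, qPoch, qBinom_zero_right hq]
  | succ m ih =>
    have hρq : ∀ n, qPoch ((ρ * q) ^ 2) q n ≠ 0 := fun n =>
      right_ne_zero_of_mul (qPoch_sq_add_two ρ q n ▸ hρ (n + 2))
    calc _ = Qpoly q (ρ * q * q ^ m) i j x y *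
            (∏ r ∈ range m, scaledOmega q x y (ρ * q * q ^ r)) * scaledOmega q x y ρ := by
          simp only [prod_range_succ', pow_succ', ← mul_assoc, pow_zero, mul_one]
      _ = qPoch ((ρ * q) ^ 2) q (2 * m) * qBinomSum q ((1 - q) * ρ * q) m
            (fun k => scaledOmega q x y ρ * Qpoly q (ρ * q) (i + k) (j + k) x y) := by
          rw [ih hρq, qBinomSum_const_mul, mul_assoc (1 - q)]
          ring
      _ = qPoch ((ρ * q) ^ 2) q (2 * m) * ((1 - ρ ^ 2) * (1 - ρ ^ 2 * q) *
            qBinomSum q ((1 - q) * ρ * q) m (fun k => Qpoly q ρ (i + k) (j + k) x y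
              - (1 - q) * ρ * Qpoly q ρ (i + (k + 1)) (j + (k + 1)) x y)) := by
          simp only [scaledOmega_mul_Qpoly hq hρ, qBinomSum_const_mul]
          rfl
      _ = _ := by
          rw [qBinomSum_succ hq, Nat.mul_succ, qPoch_sq_add_two]
          ring

/-- Q_{i,j}(x,y|ρ q^m,q) ∏_{r=0}^{m-1} ω = (ρ²;q)_{2m} Σ_{k=0}^m ... -/
theorem statement10 (q ρ : ℝ) (hq : |q| < 1) (hρ : |ρ| < 1) (i j m : ℕ) (x y : ℝ) :
    Qpoly q (ρ * q ^ m) i j x y *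
        ∏ r ∈ Finset.range m,
          omegaPM (x * Real.sqrt (1 - q) / 2) (y * Real.sqrt (1 - q) / 2) (ρ * q ^ r) =
      qPoch (ρ ^ 2) q (2 * m) *
        ∑ k ∈ Finset.range (m + 1),
          (-1 : ℝ) ^ k * qBinom q m k * q ^ (k * (k - 1) / 2) * (1 - q) ^ k * ρ ^ k *
            Qpoly q ρ (i + k) (j + k) x y := by
  obtain ⟨hq₁, hq₂⟩ := abs_lt.mp hq
  have hρ₂ : |ρ ^ 2| < 1 := by rw [abs_pow]; exact pow_lt_one₀ (abs_nonneg ρ) hρ two_ne_zero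
  simp only [omegaPM_mul_sqrt hq₂.le]
  rw [Qpoly_mul_prod_scaledOmega hq₁ (fun n => (qPoch_pos hρ₂ hq.le n).ne'), qBinomSum]
  refine congrArg _ (sum_congr rfl fun k _ => ?_)
  rw [mul_pow]
  ring
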